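/- Let C ⊆ ℝ² be a convex set and let u, v, w ∈ C each be nondominated in C, with u₁ < v₁ < w₁. Then v₂ ≤ u₂ + ((w₂ − u₂)/(w₁ − u₁))·(v₁ − u₁); that is, every nondominated point of C lies on or below the chord joining any two nondominated points whose first coordinates enclose its own. -/

import Mathlib

/-- `u` dominates `v` componentwise in `ℝ²`. -/
def Dominates (u v : ℝ × ℝ) : Prop := u ≤ v ∧ u ≠ v

/-- `s` is nondominated in `S`. -/
def NondomIn (s : ℝ × ℝ) (S : Set (ℝ × ℝ)) : Prop :=
  s ∈ S ∧ ∀ s' ∈ S, ¬ Dominates s' s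

/-! The point of the chord `[u, w]` above `v.1` lies in `C` by convexity; it has the same first
coordinate as `v`, so if it were strictly below `v` it would dominate `v`. -/

theorem NondomIn.snd_le_of_fst_le {S : Set (ℝ × ℝ)} {v p : ℝ × ℝ} (hv : NondomIn v S)
    (hp : p ∈ S) (hpv : p.1 ≤ v.1) : v.2 ≤ p.2 := by
  by_contra! hlt
  exact hv.2 p hp ⟨⟨hpv, hlt.le⟩, fun h ↦ hlt.ne (congrArg Prod.snd h)⟩

theorem Convex.mk_chord_mem {C : Set (ℝ × ℝ)} (hC : Convex ℝ C) {u w : ℝ × ℝ}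
    (hu : u ∈ C) (hw : w ∈ C) {x : ℝ} (hux : u.1 ≤ x) (hxw : x ≤ w.1) :
    (x, u.2 + (w.2 - u.2) / (w.1 - u.1) * (x - u.1)) ∈ C := by
  rcases hux.eq_or_lt with rfl | hux
  · simpa using hu
  have hwu : w.1 - u.1 ≠ 0 := by linarith
  set t := (x - u.1) / (w.1 - u.1)
  have ht : t ∈ Set.Icc (0 : ℝ) 1 :=
    ⟨div_nonneg (by linarith) (by linarith), div_le_one_of_le₀ (by linarith) (by linarith)⟩
  convert hC.lineMap_mem hu hw ht using 1
  ext <;> simp only [AffineMap.lineMap_apply_module', Prod.fst_add, Prod.snd_add,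
    Prod.smul_fst, Prod.smul_snd, Prod.fst_sub, Prod.snd_sub, smul_eq_mul, t] <;>
    field_simp <;> ring

theorem nondom_of_convex_below_chord (C : Set (ℝ × ℝ)) (hC : Convex ℝ C)
    (u v w : ℝ × ℝ) (hu : NondomIn u C) (hv : NondomIn v C) (hw : NondomIn w C)
    (huv : u.1 < v.1) (hvw : v.1 < w.1) :
    v.2 ≤ u.2 + ((w.2 - u.2) / (w.1 - u.1)) * (v.1 - u.1) :=
  hv.snd_le_of_fst_le (hC.mk_chord_mem hu.1 hw.1 huv.le hvw.le) le_rfl
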